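/- For every odd natural number n ≥ 1, the abelian group presented by the 2×2 integer relation matrix [[F_{2n}, F_{2n-1} - 1], [F_{2n+1} - 1, F_{2n}]] (i.e., ℤ²/(row span of the matrix)) is isomorphic to ℤ_{L_n} ⊕ ℤ_{L_n}, where L_n = F_{n-1} + F_{n+1} is the n-th Lucas number. -/
import Mathlib

private lemma cassini (m : ℕ) :
    (Nat.fib (2*m+1) : ℤ) * Nat.fib (2*m+1) = Nat.fib (2*m) * Nat.fib (2*m+2) + 1 := by
  induction m with
  | zero => norm_num
  | succ k ih =>
    rw [show 2*(k+1) = 2*k+2 from by ring,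
        show 2*k+2+1 = 2*k+3 from rfl, show 2*k+2+2 = 2*k+4 from rfl]
    have e1 : (Nat.fib (2*k+3) : ℤ) = Nat.fib (2*k+2) + Nat.fib (2*k+1) := by
      rw [show 2*k+3 = (2*k+1)+2 from rfl, Nat.fib_add_two]; push_cast; ring
    have e2 : (Nat.fib (2*k+2) : ℤ) = Nat.fib (2*k+1) + Nat.fib (2*k) := by
      rw [show 2*k+2 = (2*k)+2 from rfl, Nat.fib_add_two]; push_cast; ring
    have e3 : (Nat.fib (2*k+4) : ℤ) = Nat.fib (2*k+3) + Nat.fib (2*k+2) := by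
      rw [show 2*k+4 = (2*k+2)+2 from rfl, Nat.fib_add_two]; push_cast; ring
    nlinarith [ih, e1, e2, e3]

private lemma fibA (m : ℕ) :
    (Nat.fib (4*m+2) : ℤ) = Nat.fib (2*m+1) * (Nat.fib (2*m) + Nat.fib (2*m+2)) := by
  have h : 4*m+2 = 2*(2*m+1) := by ring
  rw [h, Nat.fib_two_mul]
  have hle : Nat.fib (2*m+1) ≤ 2 * Nat.fib (2*m+1+1) := by
    have := Nat.fib_le_fib_succ (n := 2*m+1); omega
  have e2 : (Nat.fib (2*m+2) : ℤ) = Nat.fib (2*m+1) + Nat.fib (2*m) := by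
    rw [show 2*m+2 = (2*m)+2 from rfl, Nat.fib_add_two]; push_cast; ring
  push_cast [Nat.cast_sub (by simpa using hle)]
  rw [show (2*m+1+1) = 2*m+2 from rfl] at *
  linear_combination Nat.fib (2*m+1) * e2

private lemma fibB (m : ℕ) :
    (Nat.fib (4*m+1) : ℤ) = Nat.fib (2*m) * (Nat.fib (2*m) + Nat.fib (2*m+2)) + 1 := by
  have h : 4*m+1 = 2*(2*m)+1 := by ring
  rw [h, Nat.fib_two_mul_add_one]
  have e2 : (Nat.fib (2*m+2) : ℤ) = Nat.fib (2*m+1) + Nat.fib (2*m) := by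
    rw [show 2*m+2 = (2*m)+2 from rfl, Nat.fib_add_two]; push_cast; ring
  have := cassini m
  push_cast
  nlinarith [this, e2]

private lemma fibC (m : ℕ) :
    (Nat.fib (4*m+3) : ℤ) = Nat.fib (2*m+2) * (Nat.fib (2*m) + Nat.fib (2*m+2)) + 1 := by
  have h : 4*m+3 = 2*(2*m+1)+1 := by ring
  rw [h, Nat.fib_two_mul_add_one]
  have e2 : (Nat.fib (2*m+2) : ℤ) = Nat.fib (2*m+1) + Nat.fib (2*m) := by
    rw [show 2*m+2 = (2*m+1)+1 from rfl]; rw [show 2*m+1+1 = (2*m)+2 from rfl, Nat.fib_add_two]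
    push_cast; ring
  have := cassini m
  push_cast
  nlinarith [this, e2]

theorem col_red_odd (n : ℕ) (hn : 1 ≤ n) (hodd : Odd n) :
    Nonempty
      (((ℤ × ℤ) ⧸ Submodule.span ℤ
          ({((Nat.fib (2 * n) : ℤ), (Nat.fib (2 * n - 1) : ℤ) - 1),
            ((Nat.fib (2 * n + 1) : ℤ) - 1, (Nat.fib (2 * n) : ℤ))} : Set (ℤ × ℤ))) ≃+
        (ZMod (Nat.fib (n - 1) + Nat.fib (n + 1)) ×
          ZMod (Nat.fib (n - 1) + Nat.fib (n + 1)))) := by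
  obtain ⟨m, rfl⟩ := hodd
  have i1 : 2*(2*m+1) = 4*m+2 := by ring
  have i2 : 2*(2*m+1) - 1 = 4*m+1 := by omega
  have i3 : 2*(2*m+1) + 1 = 4*m+3 := by ring
  have i4 : 2*m+1-1 = 2*m := rfl
  have i5 : 2*m+1+1 = 2*m+2 := rfl
  rw [i2, i3, i1, i4, i5]
  set a : ℤ := (Nat.fib (2*m) : ℤ) with ha
  set b : ℤ := (Nat.fib (2*m+1) : ℤ) with hb
  set c : ℤ := (Nat.fib (2*m+2) : ℤ) with hc
  set N : ℕ := Nat.fib (2*m) + Nat.fib (2*m+2) with hN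
  have hcas : b * b = a * c + 1 := cassini m
  have hL : ((N : ℤ)) = a + c := by push_cast [hN]; ring
  have hA : (Nat.fib (4*m+2) : ℤ) = b * (a + c) := fibA m
  have hB : (Nat.fib (4*m+1) : ℤ) - 1 = a * (a + c) := by
    have := fibB m; rw [← ha, ← hc] at this; linarith
  have hC : (Nat.fib (4*m+3) : ℤ) - 1 = c * (a + c) := by
    have := fibC m; rw [← ha, ← hc] at this; linarith
  rw [hA, hB, hC]
  -- the linear map to (ZMod N)²
  let φ : (ℤ × ℤ) →+ ZMod N × ZMod N :=
  { toFun := fun p => (((b * p.1 - c * p.2 : ℤ) : ZMod N), (((-a) * p.1 + b * p.2 : ℤ) : ZMod N))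
    map_zero' := by simp
    map_add' := by
      intro p q
      refine Prod.ext ?_ ?_ <;> simp <;> push_cast <;> ring }
  let f := φ.toIntLinearMap
  have hfapply : ∀ p : ℤ × ℤ,
      f p = (((b * p.1 - c * p.2 : ℤ) : ZMod N), (((-a) * p.1 + b * p.2 : ℤ) : ZMod N)) :=
    fun p => rfl
  have pairzero : ∀ u v : ZMod N, u = 0 → v = 0 → ((u, v) : ZMod N × ZMod N) = 0 := by
    intro u v hu hv; rw [hu, hv]; rfl
  have hle : Submodule.span ℤ
      ({(b * (a + c), a * (a + c)), (c * (a + c), b * (a + c))} : Set (ℤ × ℤ)) ≤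
      LinearMap.ker f := by
    rw [Submodule.span_le]
    rintro x (rfl | rfl) <;> rw [SetLike.mem_coe, LinearMap.mem_ker, hfapply]
    · refine pairzero _ _ ?_ ?_ <;> rw [ZMod.intCast_zmod_eq_zero_iff_dvd]
      · exact ⟨1, by rw [hL]; push_cast; linear_combination (a + c) * hcas⟩
      · exact ⟨0, by push_cast; ring⟩
    · refine pairzero _ _ ?_ ?_ <;> rw [ZMod.intCast_zmod_eq_zero_iff_dvd]
      · exact ⟨0, by push_cast; ring⟩
      · exact ⟨1, by rw [hL]; push_cast; linear_combination (a + c) * hcas⟩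
  have hge : LinearMap.ker f ≤ Submodule.span ℤ
      ({(b * (a + c), a * (a + c)), (c * (a + c), b * (a + c))} : Set (ℤ × ℤ)) := by
    intro p hp
    rw [LinearMap.mem_ker, hfapply] at hp
    have h1 : ((b * p.1 - c * p.2 : ℤ) : ZMod N) = 0 := congrArg Prod.fst hp
    have h2 : (((-a) * p.1 + b * p.2 : ℤ) : ZMod N) = 0 := congrArg Prod.snd hp
    rw [ZMod.intCast_zmod_eq_zero_iff_dvd] at h1 h2
    obtain ⟨s, hs⟩ := h1
    obtain ⟨t, ht⟩ := h2
    rw [hL] at hs ht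
    rw [Submodule.mem_span_pair]
    refine ⟨s, t, ?_⟩
    refine Prod.ext ?_ ?_ <;>
      simp only [Prod.smul_mk, Prod.fst_add, Prod.snd_add, smul_eq_mul]
    · linear_combination (-b) * hs + (-c) * ht + p.1 * hcas
    · linear_combination (-a) * hs + (-b) * ht + p.2 * hcas
  have hsurj : Function.Surjective f := by
    intro z
    obtain ⟨x0, hx0⟩ := ZMod.intCast_surjective (n := N) z.1
    obtain ⟨y0, hy0⟩ := ZMod.intCast_surjective (n := N) z.2
    refine ⟨(b * x0 + c * y0, a * x0 + b * y0), ?_⟩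
    rw [hfapply]
    refine Prod.ext ?_ ?_
    · show ((b * (b * x0 + c * y0) - c * (a * x0 + b * y0) : ℤ) : ZMod N) = z.1
      rw [← hx0]; congr 1; linear_combination x0 * hcas
    · show (((-a) * (b * x0 + c * y0) + b * (a * x0 + b * y0) : ℤ) : ZMod N) = z.2
      rw [← hy0]; congr 1; linear_combination y0 * hcas
  set S := Submodule.span ℤ
      ({(b * (a + c), a * (a + c)), (c * (a + c), b * (a + c))} : Set (ℤ × ℤ)) with hS
  let F := Submodule.liftQ S f hle
  have hker0 : LinearMap.ker F = ⊥ := Submodule.ker_liftQ_eq_bot S f hle hge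
  have hFs : Function.Surjective F := by
    intro z
    obtain ⟨x, hx⟩ := hsurj z
    exact ⟨Submodule.Quotient.mk x, hx⟩
  exact ⟨(LinearEquiv.ofBijective F ⟨LinearMap.ker_eq_bot.1 hker0, hFs⟩).toAddEquiv⟩
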